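/- Let f₁, f₂, g₁, g₂ ∈ L^∞. Then S_{f₁,g₁}S_{f₂,g₂} = S_{f₂,g₂}S_{f₁,g₁} if and only if one of the following holds: (1) f₁ = g₁ and f₂ = g₂; (2) f₁, conj(g₁), f₂, conj(g₂) ∈ H^∞; (3) there exist constants c₁, c₂, c₃ with |c₁| + |c₂| ≠ 0 such that c₁f₁ − c₂f₂ = c₃ and c₁g₁ − c₂g₂ = c₃ (equivalently c₁S_{f₁,g₁} = c₂S_{f₂,g₂} + c₃·I on L²). -/

import Mathlib

noncomputable section

open MeasureTheory Complex ComplexConjugate InnerProductSpace ContinuousLinearMap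

namespace GSIO

instance : Fact (0 < 2 * Real.pi) := ⟨by positivity⟩

/-- The circle, modeled as `ℝ / 2πℤ`. -/
abbrev Circ : Type := AddCircle (2 * Real.pi)

/-- Normalized Haar (arc-length) measure on the circle. -/
abbrev μC : Measure Circ := AddCircle.haarAddCircle

/-- `L²` of the circle. -/
abbrev L2 : Type := Lp ℂ 2 μC

/-- `L^∞` of the circle. -/
abbrev Linf : Type := Lp ℂ ⊤ μC

/-- The Hardy space `H²`: those `L²` functions whose negative Fourier coefficients vanish. -/
def Hardy : Submodule ℂ L2 where
  carrier := {f : L2 | ∀ n : ℤ, n < 0 → fourierCoeff (f : Circ → ℂ) n = 0}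
  zero_mem' := by
    intro n hn
    rw [← fourierBasis_repr]
    simp
  add_mem' := by
    intro a b ha hb n hn
    have ha' := ha n hn
    have hb' := hb n hn
    rw [← fourierBasis_repr] at ha' hb' ⊢
    rw [map_add, lp.coeFn_add, Pi.add_apply, ha', hb', add_zero]
  smul_mem' := by
    intro c a ha n hn
    have ha' := ha n hn
    rw [← fourierBasis_repr] at ha' ⊢
    rw [_root_.map_smul, lp.coeFn_smul, Pi.smul_apply, ha', smul_zero]

theorem isClosed_Hardy : IsClosed (Hardy : Set L2) := by
  have h : (Hardy : Set L2) =
      ⋂ n : {m : ℤ // m < 0}, (fun f : L2 =>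
        (innerSL ℂ (fourierBasis (T := 2 * Real.pi) n.1)) f) ⁻¹' {0} := by
    ext f
    simp only [Set.mem_iInter, Set.mem_preimage, Set.mem_singleton_iff, SetLike.mem_coe]
    constructor
    · intro hf n
      have h1 := hf n.1 n.2
      rw [← fourierBasis_repr, fourierBasis.repr_apply_apply] at h1
      simpa using h1
    · intro hf n hn
      have h1 := hf ⟨n, hn⟩
      rw [← fourierBasis_repr, fourierBasis.repr_apply_apply]
      simpa using h1
  rw [h]
  exact isClosed_iInter fun n =>
    isClosed_singleton.preimage (innerSL ℂ _).continuous

instance : CompleteSpace Hardy := isClosed_Hardy.completeSpace_coe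

/-- The Riesz projection `P₊`, i.e. the orthogonal projection of `L²` onto `H²`. -/
def Pp : L2 →L[ℂ] L2 := Hardy.subtypeL.comp (Hardy.orthogonalProjectionOnto)

/-- `P₋ = I − P₊`. -/
def Pm : L2 →L[ℂ] L2 := ContinuousLinearMap.id ℂ L2 - Pp

/-- The pointwise product of an `L^∞` function with an `L²` function, as an `L²` function. -/
def mulFun (φ : Linf) (x : L2) : L2 :=
  ((Lp.memLp x).smul (r := 2) (Lp.memLp φ)).toLp ((φ : Circ → ℂ) • (x : Circ → ℂ))

theorem mulFun_add (φ : Linf) (x y : L2) : mulFun φ (x + y) = mulFun φ x + mulFun φ y := by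
  rw [mulFun, mulFun, mulFun, ← MemLp.toLp_add]
  apply MemLp.toLp_congr
  filter_upwards [Lp.coeFn_add x y] with t ht
  have ht' : ((x + y : L2) : Circ → ℂ) t = (x : Circ → ℂ) t + (y : Circ → ℂ) t := by
    simpa using ht
  simp only [Pi.mul_apply, Pi.smul_apply, Pi.add_apply, smul_eq_mul, ht']
  ring

theorem mulFun_smul (c : ℂ) (φ : Linf) (x : L2) : mulFun φ (c • x) = c • mulFun φ x := by
  rw [mulFun, mulFun, ← MemLp.toLp_const_smul]
  apply MemLp.toLp_congr
  filter_upwards [Lp.coeFn_smul c x] with t ht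
  have ht' : ((c • x : L2) : Circ → ℂ) t = c * (x : Circ → ℂ) t := by
    simpa using ht
  simp only [Pi.mul_apply, Pi.smul_apply, smul_eq_mul, ht']
  ring

theorem norm_mulFun_le (φ : Linf) (x : L2) : ‖mulFun φ x‖ ≤ ‖φ‖ * ‖x‖ := by
  rw [mulFun, Lp.norm_toLp]
  have h := eLpNorm_smul_le_eLpNorm_top_mul_eLpNorm (μ := μC) 2
    (Lp.aestronglyMeasurable x) (φ : Circ → ℂ)
  refine le_trans (ENNReal.toReal_mono ?_ h) ?_
  · exact ENNReal.mul_ne_top (Lp.eLpNorm_ne_top φ) (Lp.eLpNorm_ne_top x)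
  · rw [ENNReal.toReal_mul, Lp.norm_def, Lp.norm_def]

/-- The multiplication operator `M_φ` on `L²`, for `φ ∈ L^∞`. -/
def mul (φ : Linf) : L2 →L[ℂ] L2 :=
  LinearMap.mkContinuous
    { toFun := mulFun φ
      map_add' := mulFun_add φ
      map_smul' := fun c x => mulFun_smul c φ x }
    ‖φ‖ (fun x => norm_mulFun_le φ x)

/-- Pointwise product in `L^∞`. -/
def mulInf (φ ψ : Linf) : Linf :=
  ((Lp.memLp ψ).smul (r := ⊤) (Lp.memLp φ)).toLp ((φ : Circ → ℂ) • (ψ : Circ → ℂ))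

/-- Complex conjugation on `L^∞`. -/
def conjInf (φ : Linf) : Linf :=
  (show MemLp (fun t => star ((φ : Circ → ℂ) t)) ⊤ μC from
    ⟨continuous_star.comp_aestronglyMeasurable (Lp.aestronglyMeasurable φ), by
      rw [eLpNorm_congr_norm_ae (g := (φ : Circ → ℂ))
        (Filter.Eventually.of_forall fun t => norm_star _)]
      exact Lp.eLpNorm_lt_top φ⟩).toLp _

/-- Complex conjugation on `L²`. -/
def conjL2 (x : L2) : L2 :=
  (show MemLp (fun t => star ((x : Circ → ℂ) t)) 2 μC from
    ⟨continuous_star.comp_aestronglyMeasurable (Lp.aestronglyMeasurable x), by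
      rw [eLpNorm_congr_norm_ae (g := (x : Circ → ℂ))
        (Filter.Eventually.of_forall fun t => norm_star _)]
      exact Lp.eLpNorm_lt_top x⟩).toLp _

/-- The inclusion `L^∞ ⊆ L²` (the measure is finite). -/
def toL2 (φ : Linf) : L2 := ((Lp.memLp φ).mono_exponent le_top).toLp φ

/-- The constant function `c` as an element of `L^∞`. -/
def constInf (c : ℂ) : Linf := (memLp_const c).toLp (fun _ => c)

/-- An `L^∞` function is constant (a.e.). -/
def IsConst (φ : Linf) : Prop := ∃ c : ℂ, φ = constInf c

/-- `φ ∈ H^∞ = L^∞ ∩ H²`: the negative Fourier coefficients of `φ` vanish. -/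
def MemHinf (φ : Linf) : Prop := ∀ n : ℤ, n < 0 → fourierCoeff (φ : Circ → ℂ) n = 0

/-- The coordinate function `z` as an element of `L^∞`. -/
def zInf : Linf := fourierLp (T := 2 * Real.pi) ⊤ 1

/-- The function `z̄` as an element of `L^∞`. -/
def zbarInf : Linf := fourierLp (T := 2 * Real.pi) ⊤ (-1)

/-- The antiunitary operator `V : h ↦ z̄ ⬝ conj h` on `L²`. -/
def Vmap (x : L2) : L2 := mul zbarInf (conjL2 x)

/-- `φ₋ = P₋ φ` for `φ ∈ L^∞`, viewed inside `L²`. -/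
def mI (φ : Linf) : L2 := Pm (toL2 φ)

/-- The rank-one operator `p ⊗ q : x ↦ ⟪x, q⟫ · p` (the inner product being conjugate-linear
in `q`). -/
def rankOne {E : Type*} [NormedAddCommGroup E] [InnerProductSpace ℂ E] (p q : E) : E →L[ℂ] E :=
  (innerSL ℂ q).smulRight p

/-- The Hilbert space direct sum `L² ⊕ L²`. -/
abbrev L2sq : Type := WithLp 2 (L2 × L2)

/-- A pair of `L²` functions, viewed as a vector in `L² ⊕ L²`. -/
def pair (x y : L2) : L2sq := (WithLp.equiv 2 (L2 × L2)).symm (x, y)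

/-- Notation for the pointwise product in `L^∞`. -/
scoped infixl:70 " ⊙ " => GSIO.mulInf

/-- The Toeplitz operator `T_φ = P₊ M_φ P₊` (viewed as acting on the corner `H²` of `L²`). -/
def Toeplitz (φ : Linf) : L2 →L[ℂ] L2 := Pp ∘L mul φ ∘L Pp

/-- The Hankel operator `H_φ = P₋ M_φ P₊ : H² → (H²)^⊥` (as a corner operator on `L²`). -/
def Hankel (φ : Linf) : L2 →L[ℂ] L2 := Pm ∘L mul φ ∘L Pp

/-- The dual Toeplitz operator `T̃_φ = P₋ M_φ P₋` on `(H²)^⊥` (as a corner operator on `L²`). -/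
def dualToeplitz (φ : Linf) : L2 →L[ℂ] L2 := Pm ∘L mul φ ∘L Pm

/-- The generalized Cauchy singular integral operator with symbol `[[f, u], [g, v]]`:
`R x = P₊ f P₊ x + P₋ g P₊ x + P₊ u P₋ x + P₋ v P₋ x`. -/
def Rop (f u g v : Linf) : L2 →L[ℂ] L2 :=
  Pp ∘L mul f ∘L Pp + Pm ∘L mul g ∘L Pp + Pp ∘L mul u ∘L Pm + Pm ∘L mul v ∘L Pm

/-- The singular integral operator `S_{f,g} = M_f P₊ + M_g P₋` on `L²`. -/
def Sop (f g : Linf) : L2 →L[ℂ] L2 := mul f ∘L Pp + mul g ∘L Pm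



/-- Negation `t ↦ -t` preserves the Haar measure of the circle. -/
theorem mp_neg : MeasurePreserving (fun t : Circ => -t) μC μC :=
  Measure.measurePreserving_neg μC

/-- Composition with `t ↦ -t` on `L²`. -/
def reflL2 : L2 →L[ℂ] L2 :=
  (Lp.compMeasurePreservingₗᵢ ℂ (fun t : Circ => -t) mp_neg).toContinuousLinearMap

/-- Composition with `t ↦ -t` on `L^∞`: for `φ ∈ L^∞`, `φ̃(z) = φ(z̄)`. -/
def reflInf (φ : Linf) : Linf := Lp.compMeasurePreserving (fun t : Circ => -t) mp_neg φ

/-- `φ* (z) = conj (φ(z̄))`. -/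
def starInf (φ : Linf) : Linf := conjInf (reflInf φ)

/-- The flip operator `J : (Jh)(z) = z̄ · h(z̄)` on `L²`. -/
def Jop : L2 →L[ℂ] L2 := mul zbarInf ∘L reflL2

/-- The Hankel operator `𝕳_φ = P₊ M_φ J` on `H²` (as a corner operator on `L²`). -/
def HankelPlus (φ : Linf) : L2 →L[ℂ] L2 := Pp ∘L mul φ ∘L Jop ∘L Pp

/-- The adjoint `H*_φ` of the Hankel operator `H_φ`. -/
def HankelAdj (φ : Linf) : L2 →L[ℂ] L2 := ContinuousLinearMap.adjoint (Hankel φ)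

/-- `θ ∈ L^∞` is an inner function: `θ ∈ H^∞` and `|θ| = 1` a.e. -/
def IsInner (θ : Linf) : Prop := MemHinf θ ∧ ∀ᵐ t ∂μC, ‖(θ : Circ → ℂ) t‖ = 1

/-- The orthogonal projection of `L²` onto `K_θ^⊥ = θH² ⊕ z̄·conj(H²)`, namely
`P₋ + M_θ P₊ M_{conj θ}`. -/
def Qproj (θ : Linf) : L2 →L[ℂ] L2 := Pm + mul θ ∘L Pp ∘L mul (conjInf θ)

/-!
Write `S = S_{f,g}`, `A = f - g` and `z` for the coordinate function. Since
`P₊(z x) = z P₊x + x̂(-1)`, multiplication by `z` commutes with `S` up to a rank-one term: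
`S (z x) = z S x + x̂(-1) A`. Using this twice, `S₁ S₂ = S₂ S₁` evaluated at `z eₙ` and at `eₙ`
(`n = -1 - j`, `j ≠ 0`) leaves `m₂(j) A₁ = m₁(j) A₂`, where `mᵢ(j)` is `f̂ᵢ(j)` for `j < 0` and
`ĝᵢ(j)` for `j > 0`. Hence either `A₁ = A₂ = 0`, or all `mᵢ` vanish (so `f₁, f₂, ḡ₁, ḡ₂ ∈ H^∞`),
or some `(c₁, c₂) ≠ 0` has `c₁ A₁ = c₂ A₂` and `c₁ m₁ = c₂ m₂`; the latter says that
`c₁ f₁ - c₂ f₂ = c₁ g₁ - c₂ g₂` has no Fourier coefficient off `0`, i.e. is constant.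

Conversely, `S_{f,f}` is multiplication by `f`; when `f₂, ḡ₂ ∈ H^∞`, multiplication by `f₂` keeps
`H²` and by `g₂` keeps `(H²)^⊥`, so `S₁ S₂ = M_{f₁ f₂} P₊ + M_{g₁ g₂} P₋`; and in the last case
`c₁ S₁ - c₂ S₂ = c₃`.
-/

end GSIO

section fourierCoeff

variable {T : ℝ} [Fact (0 < T)]

theorem fourierCoeff_fourier_mul (j : ℤ) (f : AddCircle T → ℂ) (k : ℤ) :
    fourierCoeff (fun t => fourier j t * f t) k = fourierCoeff f (k - j) := by
  simp only [fourierCoeff, smul_eq_mul, ← mul_assoc, ← fourier_add]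
  ring_nf

theorem fourierCoeff_conj (f : AddCircle T → ℂ) (n : ℤ) :
    fourierCoeff (fun t => conj (f t)) n = conj (fourierCoeff f (-n)) := by
  simp only [fourierCoeff, smul_eq_mul, ← integral_conj, map_mul, ← fourier_neg, neg_neg]

theorem fourierCoeff_const (c : ℂ) (n : ℤ) :
    fourierCoeff (fun _ : AddCircle T => c) n = if n = 0 then c else 0 := by
  have h := fourierCoeff.const_mul (fourier (T := T) 0) c n
  simp only [fourier_zero, mul_one, fourierCoeff_fourier] at h
  rw [h, Pi.single_apply]
  split_ifs <;> simp

end fourierCoeff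

theorem norm_add_norm_ne_zero_iff {E F : Type*} [NormedAddCommGroup E] [NormedAddCommGroup F]
    {a : E} {b : F} : ‖a‖ + ‖b‖ ≠ 0 ↔ a ≠ 0 ∨ b ≠ 0 := by
  rw [Ne, add_eq_zero_iff_of_nonneg (norm_nonneg a) (norm_nonneg b), norm_eq_zero, norm_eq_zero]
  tauto

-- `(a, b)` and `(a', b')` lie in the kernel of `(x, y) ↦ x • v - y • w`, a line when `(v, w) ≠ 0`.
theorem mul_eq_mul_of_smul_eq_smul {K V : Type*} [Field K] [AddCommGroup V] [Module K V]
    {v w : V} (hvw : v ≠ 0 ∨ w ≠ 0) {a b a' b' : K} (h : a • v = b • w)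
    (h' : a' • v = b' • w) : a * b' = b * a' := by
  rw [← sub_eq_zero]
  rcases hvw with hv | hw
  · refine (smul_eq_zero.mp ?_).resolve_right hv
    linear_combination (norm := module) b' • h - b • h'
  · refine (smul_eq_zero.mp ?_).resolve_right hw
    linear_combination (norm := module) a' • h - a • h'

theorem eq_zero_or_eq_zero_or_exists_smul_eq_smul {K V ι : Type*} [Field K] [AddCommGroup V]
    [Module K V] {v w : V} {a b : ι → K} (h : ∀ i, a i • v = b i • w) :
    (v = 0 ∧ w = 0) ∨ (a = 0 ∧ b = 0) ∨
      ∃ c₁ c₂ : K, (c₁ ≠ 0 ∨ c₂ ≠ 0) ∧ c₁ • v = c₂ • w ∧ ∀ i, c₁ * b i = c₂ * a i := by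
  by_cases hvw : v = 0 ∧ w = 0
  · exact Or.inl hvw
  by_cases hab : a = 0 ∧ b = 0
  · exact Or.inr (Or.inl hab)
  obtain ⟨i₀, hi₀⟩ : ∃ i₀, a i₀ ≠ 0 ∨ b i₀ ≠ 0 := by
    by_contra! H
    exact hab ⟨funext fun i => (H i).1, funext fun i => (H i).2⟩
  exact Or.inr (Or.inr ⟨a i₀, b i₀, hi₀, h i₀,
    fun i => mul_eq_mul_of_smul_eq_smul (not_and_or.mp hvw) (h i₀) (h i)⟩)

theorem commute_of_smul_sub_smul_eq_algebraMap {K A : Type*} [Field K] [Ring A] [Algebra K A]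
    {a b : A} {c₁ c₂ c₃ : K} (hc : c₁ ≠ 0 ∨ c₂ ≠ 0) (h : c₁ • a - c₂ • b = algebraMap K A c₃) :
    Commute a b := by
  rcases hc with hc | hc
  · have hab : Commute (c₁ • a) b := by
      rw [show c₁ • a = algebraMap K A c₃ + c₂ • b by rw [← h]; abel]
      exact (Algebra.commute_algebraMap_left c₃ b).add_left ((Commute.refl b).smul_left c₂)
    simpa [inv_smul_smul₀ hc] using hab.smul_left c₁⁻¹
  · have hab : Commute a (c₂ • b) := by
      rw [show c₂ • b = c₁ • a - algebraMap K A c₃ by rw [← h]; abel]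
      exact ((Commute.refl a).smul_right c₁).sub_right (Algebra.commute_algebraMap_right c₃ a)
    simpa [inv_smul_smul₀ hc] using hab.smul_right c₂⁻¹

namespace GSIO

local notation "𝐞" => fourierBasis (T := 2 * Real.pi)

def fourierCoeffₗ (p : ENNReal) [Fact (1 ≤ p)] : Lp ℂ p μC →ₗ[ℂ] (ℤ → ℂ) where
  toFun x := fourierCoeff (x : Circ → ℂ)
  map_add' x y := by
    rw [fourierCoeff_congr_ae (Lp.coeFn_add x y),
      fourierCoeff.add ((Lp.memLp x).integrable Fact.out) ((Lp.memLp y).integrable Fact.out)]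
  map_smul' c x := by
    ext n
    rw [fourierCoeff_congr_ae (Lp.coeFn_smul c x)]
    exact fourierCoeff.const_smul _ c n

local notation "coeff" => fourierCoeffₗ _

theorem fourierCoeffₗ_apply (p : ENNReal) [Fact (1 ≤ p)] (x : Lp ℂ p μC) (n : ℤ) :
    fourierCoeffₗ p x n = fourierCoeff (x : Circ → ℂ) n := rfl

theorem fourierCoeffₗ_e (n : ℤ) : coeff (𝐞 n) = Pi.single n 1 := by
  rw [fourierCoeffₗ, LinearMap.coe_mk, AddHom.coe_mk, coe_fourierBasis,
    fourierCoeff_congr_ae (coeFn_fourierLp 2 n), fourierCoeff_fourier]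

theorem fourierCoeffₗ_eq_repr (x : L2) : coeff x = ⇑(fourierBasis.repr x) :=
  funext fun n => (fourierBasis_repr x n).symm

theorem L2.ext_fourierCoeff {x y : L2} (h : coeff x = coeff y) : x = y := by
  apply fourierBasis.repr.injective
  apply lp.ext
  rwa [← fourierCoeffₗ_eq_repr, ← fourierCoeffₗ_eq_repr]

theorem fourierCoeffₗ_toL2 (φ : Linf) : coeff (toL2 φ) = coeff φ :=
  fourierCoeff_congr_ae (MemLp.coeFn_toLp _)

theorem Linf.ext_fourierCoeff {φ ψ : Linf} (h : coeff φ = coeff ψ) : φ = ψ := by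
  have hL2 : toL2 φ = toL2 ψ :=
    L2.ext_fourierCoeff (by rw [fourierCoeffₗ_toL2, fourierCoeffₗ_toL2, h])
  apply Lp.ext
  have hae : (toL2 φ : Circ → ℂ) =ᵐ[μC] (toL2 ψ : Circ → ℂ) := by rw [hL2]
  exact ((MemLp.coeFn_toLp _).symm.trans hae).trans (MemLp.coeFn_toLp _)

theorem fourierCoeffₗ_constInf (c : ℂ) (n : ℤ) : coeff (constInf c) n = if n = 0 then c else 0 := by
  rw [fourierCoeffₗ_apply, fourierCoeff_congr_ae (f := ⇑(constInf c)) (MemLp.coeFn_toLp _),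
    fourierCoeff_const]

theorem eq_constInf_of_fourierCoeff {φ : Linf} (h : ∀ n ≠ 0, coeff φ n = 0) :
    φ = constInf (coeff φ 0) := by
  apply Linf.ext_fourierCoeff
  ext n
  rw [fourierCoeffₗ_constInf]
  split_ifs with hn
  · rw [hn]
  · exact h n hn

theorem coeFn_conjInf (φ : Linf) :
    (conjInf φ : Circ → ℂ) =ᵐ[μC] fun t => conj ((φ : Circ → ℂ) t) :=
  MemLp.coeFn_toLp _

theorem fourierCoeffₗ_conjInf (φ : Linf) (n : ℤ) : coeff (conjInf φ) n = conj (coeff φ (-n)) := by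
  rw [fourierCoeffₗ_apply, fourierCoeff_congr_ae (coeFn_conjInf φ), fourierCoeff_conj]
  rfl

theorem memHinf_iff (φ : Linf) : MemHinf φ ↔ ∀ n < 0, coeff φ n = 0 := Iff.rfl

theorem memHinf_conjInf_iff (φ : Linf) : MemHinf (conjInf φ) ↔ ∀ n, 0 < n → coeff φ n = 0 := by
  refine ⟨fun h n hn => ?_, fun h n hn => ?_⟩
  · have h' : coeff (conjInf φ) (-n) = 0 := h (-n) (by omega)
    rwa [fourierCoeffₗ_conjInf, neg_neg, map_eq_zero] at h'
  · change coeff (conjInf φ) n = 0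
    rw [fourierCoeffₗ_conjInf, h (-n) (by omega), map_zero]

theorem e_mem_Hardy {n : ℤ} (hn : 0 ≤ n) : 𝐞 n ∈ Hardy := fun k hk => by
  rw [← fourierCoeffₗ_apply, fourierCoeffₗ_e, Pi.single_apply, if_neg (by omega)]

theorem fourierCoeffₗ_Pp (x : L2) (n : ℤ) : coeff (Pp x) n = if 0 ≤ n then coeff x n else 0 := by
  split_ifs with hn
  · have horth : x - Pp x ∈ Hardyᗮ := by
      have h := Hardy.sub_starProjection_mem_orthogonal x
      rwa [Submodule.starProjection_apply] at h
    have h := (Submodule.mem_orthogonal' Hardy _).mp horth _ (e_mem_Hardy hn)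
    rw [← inner_conj_symm, ← fourierBasis.repr_apply_apply, fourierBasis_repr, map_eq_zero,
      ← fourierCoeffₗ_apply, map_sub, Pi.sub_apply] at h
    exact (sub_eq_zero.mp h).symm
  · exact (Hardy.orthogonalProjectionOnto x).2 n (not_le.mp hn)

theorem fourierCoeffₗ_Pm (x : L2) (n : ℤ) : coeff (Pm x) n = if 0 ≤ n then 0 else coeff x n := by
  have h : Pm x = x - Pp x := rfl
  rw [h, map_sub, Pi.sub_apply, fourierCoeffₗ_Pp]
  split_ifs <;> simp

theorem Pm_eq_zero_iff (x : L2) : Pm x = 0 ↔ ∀ n < 0, coeff x n = 0 := by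
  constructor
  · intro h n hn
    simpa [fourierCoeffₗ_Pm, not_le.mpr hn] using congrFun (congrArg coeff h) n
  · intro h
    refine L2.ext_fourierCoeff (funext fun n => ?_)
    rw [fourierCoeffₗ_Pm, map_zero]
    split_ifs with hn
    · rfl
    · exact h n (not_le.mp hn)

theorem Pp_eq_zero_iff (x : L2) : Pp x = 0 ↔ ∀ n, 0 ≤ n → coeff x n = 0 := by
  constructor
  · intro h n hn
    simpa [fourierCoeffₗ_Pp, hn] using congrFun (congrArg coeff h) n
  · intro h
    refine L2.ext_fourierCoeff (funext fun n => ?_)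
    rw [fourierCoeffₗ_Pp, map_zero]
    split_ifs with hn
    · exact h n hn
    · rfl

theorem Pm_Pp (x : L2) : Pm (Pp x) = 0 :=
  (Pm_eq_zero_iff _).mpr fun n hn => by rw [fourierCoeffₗ_Pp, if_neg (not_le.mpr hn)]

theorem Pp_Pm (x : L2) : Pp (Pm x) = 0 :=
  (Pp_eq_zero_iff _).mpr fun n hn => by rw [fourierCoeffₗ_Pm, if_pos hn]

theorem Pp_add_Pm : Pp + Pm = ContinuousLinearMap.id ℂ L2 := add_sub_cancel Pp _

theorem coeFn_mul (φ : Linf) (x : L2) :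
    (mul φ x : Circ → ℂ) =ᵐ[μC] fun t => (φ : Circ → ℂ) t * (x : Circ → ℂ) t :=
  MemLp.coeFn_toLp ((Lp.memLp x).smul (Lp.memLp φ))

theorem mul_mul_comm (φ ψ : Linf) (x : L2) : mul φ (mul ψ x) = mul ψ (mul φ x) := by
  apply Lp.ext
  filter_upwards [coeFn_mul φ (mul ψ x), coeFn_mul ψ x, coeFn_mul ψ (mul φ x), coeFn_mul φ x]
    with t h₁ h₂ h₃ h₄
  rw [h₁, h₂, h₃, h₄, mul_left_comm]

theorem commute_mul (φ ψ : Linf) : Commute (mul φ) (mul ψ) :=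
  ContinuousLinearMap.ext fun x => mul_mul_comm φ ψ x

theorem mul_smul_sub_smul (c d : ℂ) (φ ψ : Linf) :
    mul (c • φ - d • ψ) = c • mul φ - d • mul ψ := by
  ext1 x
  apply Lp.ext
  filter_upwards [coeFn_mul (c • φ - d • ψ) x, Lp.coeFn_sub (c • φ) (d • ψ), Lp.coeFn_smul c φ,
    Lp.coeFn_smul d ψ, Lp.coeFn_sub (c • mul φ x) (d • mul ψ x), Lp.coeFn_smul c (mul φ x),
    Lp.coeFn_smul d (mul ψ x), coeFn_mul φ x, coeFn_mul ψ x] with t h₁ h₂ h₃ h₄ h₅ h₆ h₇ h₈ h₉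
  simp only [sub_apply, smul_apply, h₁, h₂, h₃, h₄, h₅, h₆, h₇, h₈, h₉, Pi.sub_apply,
    Pi.smul_apply, smul_eq_mul]
  ring

theorem mul_constInf (c : ℂ) : mul (constInf c) = c • 1 := by
  ext1 x
  apply Lp.ext
  filter_upwards [coeFn_mul (constInf c) x, MemLp.coeFn_toLp (memLp_const c),
    Lp.coeFn_smul c x] with t h₁ h₂ h₃
  rw [smul_apply, one_apply_eq_self, h₁, h₃, constInf, h₂]
  rfl

theorem fourierCoeffₗ_mul_fourierLp (j : ℤ) (x : L2) (k : ℤ) :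
    coeff (mul (fourierLp ⊤ j) x) k = coeff x (k - j) := by
  rw [fourierCoeffₗ_apply, fourierCoeff_congr_ae (coeFn_mul _ x), fourierCoeffₗ_apply,
    ← fourierCoeff_fourier_mul]
  exact congrFun (fourierCoeff_congr_ae (by
    filter_upwards [coeFn_fourierLp ⊤ j] with t ht
    rw [ht])) k

theorem fourierCoeffₗ_mul_e (φ : Linf) (n k : ℤ) : coeff (mul φ (𝐞 n)) k = coeff φ (k - n) := by
  rw [fourierCoeffₗ_apply, fourierCoeff_congr_ae (coeFn_mul _ _), fourierCoeffₗ_apply,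
    ← fourierCoeff_fourier_mul]
  refine congrFun (fourierCoeff_congr_ae ?_) k
  filter_upwards [coe_fourierBasis (T := 2 * Real.pi) ▸ coeFn_fourierLp 2 n] with t ht
  rw [ht, mul_comm]

theorem fourierCoeffₗ_mul_e_zero (φ : Linf) : coeff (mul φ (𝐞 0)) = coeff φ :=
  funext fun k => by rw [fourierCoeffₗ_mul_e, sub_zero]

theorem inner_mul_conjInf (φ : Linf) (u x : L2) :
    inner ℂ (mul (conjInf φ) u) x = inner ℂ u (mul φ x) := by
  rw [MeasureTheory.L2.inner_def, MeasureTheory.L2.inner_def]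
  apply integral_congr_ae
  filter_upwards [coeFn_mul (conjInf φ) u, coeFn_mul φ x, coeFn_conjInf φ] with t h₁ h₂ h₃
  simp only [RCLike.inner_apply, h₁, h₂, h₃, map_mul, conj_conj]
  ring

theorem hasSum_fourierCoeffₗ_mul (φ : Linf) (x : L2) (m : ℤ) :
    HasSum (fun k => coeff φ (m - k) * coeff x k) (coeff (mul φ x) m) := by
  have h := fourierBasis.hasSum_inner_mul_inner (mul (conjInf φ) (𝐞 m)) x
  simp only [inner_mul_conjInf, ← fourierBasis.repr_apply_apply, fourierBasis_repr] at h
  simpa only [← fourierCoeffₗ_apply, fourierCoeffₗ_mul_e] using h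

theorem Pm_mul_eq_zero {φ : Linf} (hφ : MemHinf φ) {x : L2} (hx : Pm x = 0) :
    Pm (mul φ x) = 0 := by
  rw [Pm_eq_zero_iff] at hx ⊢
  intro m hm
  refine (hasSum_fourierCoeffₗ_mul φ x m).unique ?_
  convert hasSum_zero with k
  rcases lt_or_ge k 0 with hk | hk
  · rw [hx k hk, mul_zero]
  · rw [fourierCoeffₗ_apply, hφ (m - k) (by omega), zero_mul]

theorem Pp_mul_eq_zero {φ : Linf} (hφ : MemHinf (conjInf φ)) {x : L2} (hx : Pp x = 0) :
    Pp (mul φ x) = 0 := by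
  rw [memHinf_conjInf_iff] at hφ
  rw [Pp_eq_zero_iff] at hx ⊢
  intro m hm
  refine (hasSum_fourierCoeffₗ_mul φ x m).unique ?_
  convert hasSum_zero with k
  rcases lt_or_ge k 0 with hk | hk
  · rw [hφ (m - k) (by omega), zero_mul]
  · rw [hx k hk, mul_zero]

theorem Pp_mul_zInf (x : L2) : Pp (mul zInf x) = mul zInf (Pp x) + coeff x (-1) • 𝐞 0 := by
  refine L2.ext_fourierCoeff (funext fun k => ?_)
  simp only [map_add, map_smul, Pi.add_apply, Pi.smul_apply, fourierCoeffₗ_Pp, zInf,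
    fourierCoeffₗ_mul_fourierLp, fourierCoeffₗ_e, Pi.single_apply, smul_eq_mul]
  split_ifs <;> first | omega | simp_all

theorem Pm_mul_zInf (x : L2) : Pm (mul zInf x) = mul zInf (Pm x) - coeff x (-1) • 𝐞 0 := by
  change mul zInf x - Pp (mul zInf x) = mul zInf (x - Pp x) - _
  rw [Pp_mul_zInf, map_sub]
  abel

theorem Sop_apply (f g : Linf) (x : L2) : Sop f g x = mul f (Pp x) + mul g (Pm x) := rfl

theorem Sop_self (φ : Linf) : Sop φ φ = mul φ := by
  rw [Sop, ← comp_add, Pp_add_Pm, comp_id]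

theorem Sop_smul_sub_smul (c d : ℂ) (f₁ g₁ f₂ g₂ : Linf) :
    Sop (c • f₁ - d • f₂) (c • g₁ - d • g₂) = c • Sop f₁ g₁ - d • Sop f₂ g₂ := by
  simp only [Sop, mul_smul_sub_smul, sub_comp, smul_comp]
  module

theorem Sop_of_Pm_eq_zero (f g : Linf) {x : L2} (hx : Pm x = 0) : Sop f g x = mul f x := by
  have hPp : Pp x = x := (sub_eq_zero.mp hx).symm
  simp [Sop, hPp, hx]

theorem Sop_of_Pp_eq_zero (f g : Linf) {x : L2} (hx : Pp x = 0) : Sop f g x = mul g x := by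
  have hPm : Pm x = x := by simp [Pm, hx]
  simp [Sop, hPm, hx]

theorem Sop_Sop_of_memHinf (f₁ g₁ : Linf) {f₂ g₂ : Linf} (hf₂ : MemHinf f₂)
    (hg₂ : MemHinf (conjInf g₂)) (x : L2) :
    Sop f₁ g₁ (Sop f₂ g₂ x) = mul f₁ (mul f₂ (Pp x)) + mul g₁ (mul g₂ (Pm x)) := by
  rw [Sop_apply f₂, map_add,
    Sop_of_Pm_eq_zero _ _ (Pm_mul_eq_zero hf₂ (Pm_Pp x)),
    Sop_of_Pp_eq_zero _ _ (Pp_mul_eq_zero hg₂ (Pp_Pm x))]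

theorem Sop_mul_zInf (f g : Linf) (x : L2) :
    Sop f g (mul zInf x) = mul zInf (Sop f g x) + coeff x (-1) • (mul f (𝐞 0) - mul g (𝐞 0)) := by
  simp only [Sop, add_apply, comp_apply, Pp_mul_zInf, Pm_mul_zInf, map_add, map_sub, map_smul,
    mul_mul_comm zInf]
  module

theorem Sop_Sop_mul_zInf (f₁ g₁ f₂ g₂ : Linf) {x : L2} (hx : coeff x (-1) = 0) :
    Sop f₁ g₁ (Sop f₂ g₂ (mul zInf x)) = mul zInf (Sop f₁ g₁ (Sop f₂ g₂ x)) +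
      coeff (Sop f₂ g₂ x) (-1) • (mul f₁ (𝐞 0) - mul g₁ (𝐞 0)) := by
  rw [Sop_mul_zInf f₂, hx, zero_smul, add_zero, Sop_mul_zInf]

def mixedCoeff (f g : Linf) (j : ℤ) : ℂ :=
  if j < 0 then coeff f j else if 0 < j then coeff g j else 0

theorem fourierCoeffₗ_Sop_e (f g : Linf) {n : ℤ} (hn : n ≠ -1) :
    coeff (Sop f g (𝐞 n)) (-1) = mixedCoeff f g (-1 - n) := by
  rcases le_or_gt 0 n with hn₀ | hn₀
  · have he : Pm (𝐞 n) = 0 := (Pm_eq_zero_iff _).mpr (e_mem_Hardy hn₀)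
    rw [Sop_of_Pm_eq_zero f g he, fourierCoeffₗ_mul_e, mixedCoeff, if_pos (by omega)]
  · have he : Pp (𝐞 n) = 0 := (Pp_eq_zero_iff _).mpr fun k hk => by
      rw [fourierCoeffₗ_e, Pi.single_apply, if_neg (by omega)]
    rw [Sop_of_Pp_eq_zero f g he, fourierCoeffₗ_mul_e, mixedCoeff, if_neg (by omega),
      if_pos (by omega)]

theorem smul_sub_eq_of_commute {f₁ g₁ f₂ g₂ : Linf}
    (h : Sop f₁ g₁ ∘L Sop f₂ g₂ = Sop f₂ g₂ ∘L Sop f₁ g₁) (j : ℤ) :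
    mixedCoeff f₂ g₂ j • (f₁ - g₁) = mixedCoeff f₁ g₁ j • (f₂ - g₂) := by
  rcases eq_or_ne j 0 with rfl | hj
  · simp [mixedCoeff]
  have hn : -1 - j ≠ -1 := by omega
  have he : coeff (𝐞 (-1 - j)) (-1) = 0 := by
    rw [fourierCoeffₗ_e, Pi.single_apply, if_neg (by omega)]
  have h₀ := DFunLike.congr_fun h (𝐞 (-1 - j))
  have hz := DFunLike.congr_fun h (mul zInf (𝐞 (-1 - j)))
  simp only [comp_apply] at h₀ hz
  rw [Sop_Sop_mul_zInf _ _ _ _ he, Sop_Sop_mul_zInf _ _ _ _ he, h₀, add_right_inj,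
    fourierCoeffₗ_Sop_e _ _ hn, fourierCoeffₗ_Sop_e _ _ hn, sub_sub_cancel] at hz
  apply Linf.ext_fourierCoeff
  simpa only [map_smul, map_sub, fourierCoeffₗ_mul_e_zero] using congrArg coeff hz

theorem mixedCoeff_eq_zero_iff (f g : Linf) :
    mixedCoeff f g = 0 ↔ MemHinf f ∧ MemHinf (conjInf g) := by
  rw [memHinf_iff, memHinf_conjInf_iff, funext_iff]
  refine ⟨fun h => ⟨fun n hn => ?_, fun n hn => ?_⟩, fun ⟨hf, hg⟩ j => ?_⟩
  · simpa [mixedCoeff, hn] using h n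
  · simpa [mixedCoeff, hn, hn.not_gt] using h n
  · unfold mixedCoeff
    split_ifs with hneg hpos
    · exact hf j hneg
    · exact hg j hpos
    · rfl

theorem exists_constInf_of_mixedCoeff {f₁ g₁ f₂ g₂ : Linf} {c₁ c₂ : ℂ}
    (hfg : c₁ • (f₁ - g₁) = c₂ • (f₂ - g₂))
    (hm : ∀ j, c₁ * mixedCoeff f₁ g₁ j = c₂ * mixedCoeff f₂ g₂ j) :
    ∃ c₃, c₁ • f₁ - c₂ • f₂ = constInf c₃ ∧ c₁ • g₁ - c₂ • g₂ = constInf c₃ := by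
  have hg : c₁ • g₁ - c₂ • g₂ = c₁ • f₁ - c₂ • f₂ := by
    linear_combination (norm := module) -hfg
  have hcoeff : ∀ j ≠ 0, coeff (c₁ • f₁ - c₂ • f₂) j = 0 := by
    intro j hj
    rcases lt_or_gt_of_ne hj with hneg | hpos
    · simpa [mixedCoeff, hneg, sub_eq_zero] using hm j
    · rw [← hg]
      simpa [mixedCoeff, hpos, hpos.not_gt, sub_eq_zero] using hm j
  exact ⟨_, eq_constInf_of_fourierCoeff hcoeff, hg.trans (eq_constInf_of_fourierCoeff hcoeff)⟩

/-- `S_{f₁,g₁}` and `S_{f₂,g₂}` commute iff one of the three listed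
conditions holds. -/
theorem statement16 (f₁ f₂ g₁ g₂ : Linf) :
    Sop f₁ g₁ ∘L Sop f₂ g₂ = Sop f₂ g₂ ∘L Sop f₁ g₁ ↔
      (f₁ = g₁ ∧ f₂ = g₂) ∨
        (MemHinf f₁ ∧ MemHinf (conjInf g₁) ∧ MemHinf f₂ ∧ MemHinf (conjInf g₂)) ∨
        (∃ c₁ c₂ c₃ : ℂ, ‖c₁‖ + ‖c₂‖ ≠ 0 ∧
          c₁ • f₁ - c₂ • f₂ = constInf c₃ ∧ c₁ • g₁ - c₂ • g₂ = constInf c₃) := by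
  constructor
  · intro h
    rcases eq_zero_or_eq_zero_or_exists_smul_eq_smul (smul_sub_eq_of_commute h) with
      ⟨h₁, h₂⟩ | ⟨h₂, h₁⟩ | ⟨c₁, c₂, hc, hfg, hm⟩
    · exact Or.inl ⟨sub_eq_zero.mp h₁, sub_eq_zero.mp h₂⟩
    · obtain ⟨hf₁, hg₁⟩ := (mixedCoeff_eq_zero_iff f₁ g₁).mp h₁
      obtain ⟨hf₂, hg₂⟩ := (mixedCoeff_eq_zero_iff f₂ g₂).mp h₂
      exact Or.inr (Or.inl ⟨hf₁, hg₁, hf₂, hg₂⟩)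
    · obtain ⟨c₃, hf, hg⟩ := exists_constInf_of_mixedCoeff hfg hm
      exact Or.inr (Or.inr ⟨c₁, c₂, c₃, norm_add_norm_ne_zero_iff.mpr hc, hf, hg⟩)
  · rintro (⟨rfl, rfl⟩ | ⟨hf₁, hg₁, hf₂, hg₂⟩ | ⟨c₁, c₂, c₃, hc, hf, hg⟩)
    · rw [Sop_self, Sop_self]
      exact (commute_mul f₁ f₂).eq
    · ext1 x
      rw [comp_apply, comp_apply, Sop_Sop_of_memHinf f₁ g₁ hf₂ hg₂,
        Sop_Sop_of_memHinf f₂ g₂ hf₁ hg₁, mul_mul_comm f₁ f₂, mul_mul_comm g₁ g₂]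
    · refine (commute_of_smul_sub_smul_eq_algebraMap (c₃ := c₃)
        (norm_add_norm_ne_zero_iff.mp hc) ?_).eq
      rw [← Sop_smul_sub_smul, hf, hg, Sop_self, mul_constInf, Algebra.algebraMap_eq_smul_one]

end GSIO
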